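/- arXiv:0908.3066 — 7 statements merged into one kernel-verified Lean document; each statement's English description precedes it below -/
import Mathlib

section
/- For every integer x ≥ 1, the total number of queries used by the geometric quantum search algorithm with ratio e to find a marked element at position x satisfies C(x) := Σ_{s=0}^{⌊ln x⌋+1} (⌈(π/4)·√⌊e^s⌋⌉ + 1) ≤ π·e·√x. -/
open Finset

/-- The total number of queries used by the geometric quantum search algorithm
with ratio `e` to find a marked element at position `x`:
`C(x) = Σ_{s=0}^{⌊ln x⌋+1} (⌈(π/4)·√⌊e^s⌋⌉ + 1)`. -/
noncomputable def geomQueries (x : ℕ) : ℝ :=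
  ∑ s ∈ Finset.range (⌊Real.log x⌋.toNat + 2),
    ((⌈(Real.pi / 4) * Real.sqrt ((⌊Real.exp s⌋ : ℤ) : ℝ)⌉ : ℝ) + 1)

theorem geom_search_queries_le (x : ℕ) (hx : 1 ≤ x) :
    geomQueries x ≤ Real.pi * Real.exp 1 * Real.sqrt x := by
  have hx1 : (1:ℝ) ≤ (x:ℝ) := by exact_mod_cast hx
  have hxpos : (0:ℝ) < (x:ℝ) := by linarith
  have hlog0 : 0 ≤ Real.log x := Real.log_nonneg hx1
  set L : ℕ := ⌊Real.log (x:ℝ)⌋.toNat with hLdef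
  have hLle : (L:ℝ) ≤ Real.log x := by
    have h0 : (0:ℤ) ≤ ⌊Real.log (x:ℝ)⌋ := Int.floor_nonneg.mpr hlog0
    have h1 : ((L:ℤ):ℝ) = ((⌊Real.log (x:ℝ)⌋:ℤ):ℝ) := by
      rw [hLdef, Int.toNat_of_nonneg h0]
    calc (L:ℝ) = ((⌊Real.log (x:ℝ)⌋:ℤ):ℝ) := by exact_mod_cast h1
    _ ≤ Real.log x := Int.floor_le _
  set r : ℝ := Real.exp (1/2) with hrdef
  have hre : r = Real.sqrt (Real.exp 1) := by rw [hrdef, Real.exp_half]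
  have hegt : (2.7182818283:ℝ) < Real.exp 1 := Real.exp_one_gt_d9
  have helt : Real.exp 1 < 2.7182818286 := Real.exp_one_lt_d9
  have hrlb : (1.64:ℝ) ≤ r := by
    rw [hre, show (1.64:ℝ) = Real.sqrt (1.64^2) by rw [Real.sqrt_sq (by norm_num)]]
    exact Real.sqrt_le_sqrt (by nlinarith)
  have hrub : r ≤ 1.6488 := by
    rw [hre, show (1.6488:ℝ) = Real.sqrt (1.6488^2) by rw [Real.sqrt_sq (by norm_num)]]
    exact Real.sqrt_le_sqrt (by nlinarith)
  have hr1 : (1:ℝ) < r := by linarith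
  have hpi : (0:ℝ) < Real.pi := Real.pi_pos
  have hrpow : ∀ s : ℕ, r ^ s = Real.exp ((s:ℝ)/2) := by
    intro s
    rw [hrdef, ← Real.exp_nat_mul]
    ring_nf
  -- term bound
  have hterm : ∀ s ∈ Finset.range (L+2),
      ((⌈(Real.pi / 4) * Real.sqrt ((⌊Real.exp (s:ℕ)⌋ : ℤ) : ℝ)⌉ : ℝ) + 1)
        ≤ (Real.pi/4) * r^s + 2 := by
    intro s _
    have h2 : ((⌊Real.exp (s:ℕ)⌋:ℤ):ℝ) ≤ Real.exp (s:ℕ) := Int.floor_le _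
    have h1 : Real.sqrt ((⌊Real.exp (s:ℕ)⌋:ℤ):ℝ) ≤ r^s := by
      calc Real.sqrt ((⌊Real.exp (s:ℕ)⌋:ℤ):ℝ) ≤ Real.sqrt (Real.exp (s:ℕ)) :=
            Real.sqrt_le_sqrt h2
      _ = Real.exp ((s:ℝ)/2) := (Real.exp_half _).symm
      _ = r^s := (hrpow s).symm
    have h3 : ((⌈(Real.pi / 4) * Real.sqrt ((⌊Real.exp (s:ℕ)⌋ : ℤ) : ℝ)⌉:ℤ):ℝ)
        < (Real.pi / 4) * Real.sqrt ((⌊Real.exp (s:ℕ)⌋ : ℤ) : ℝ) + 1 := Int.ceil_lt_add_one _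
    have h4 : (Real.pi/4) * Real.sqrt ((⌊Real.exp (s:ℕ)⌋ : ℤ) : ℝ) ≤ (Real.pi/4) * r^s :=
      mul_le_mul_of_nonneg_left h1 (by positivity)
    linarith
  have hsum : geomQueries x ≤ ∑ s ∈ Finset.range (L+2), ((Real.pi/4) * r^s + 2) := by
    rw [geomQueries]
    exact Finset.sum_le_sum hterm
  have hgeom : ∑ s ∈ Finset.range (L+2), ((Real.pi/4) * r^s + 2)
      = (Real.pi/4) * ((r^(L+2) - 1)/(r-1)) + 2*(L+2) := by
    rw [Finset.sum_add_distrib, ← Finset.mul_sum, geom_sum_eq hr1.ne' (L+2)]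
    simp [Finset.sum_const, Finset.card_range]
    ring
  set S : ℝ := Real.sqrt x with hSdef
  have hS1 : (1:ℝ) ≤ S := by
    rw [hSdef, show (1:ℝ) = Real.sqrt 1 by simp]
    exact Real.sqrt_le_sqrt hx1
  have hSpos : (0:ℝ) < S := by linarith
  have hrL : r^L ≤ S := by
    rw [hrpow L, hSdef]
    calc Real.exp ((L:ℝ)/2) = Real.sqrt (Real.exp L) := Real.exp_half _
    _ ≤ Real.sqrt (Real.exp (Real.log x)) := Real.sqrt_le_sqrt (Real.exp_le_exp.mpr hLle)
    _ = Real.sqrt x := by rw [Real.exp_log hxpos]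
  have hr2 : r^2 = Real.exp 1 := by
    rw [hrdef, ← Real.exp_nat_mul]; norm_num
  have hrL2 : r^(L+2) ≤ Real.exp 1 * S := by
    rw [pow_add, hr2]
    calc r^L * Real.exp 1 ≤ S * Real.exp 1 :=
      mul_le_mul_of_nonneg_right hrL (by positivity)
    _ = Real.exp 1 * S := by ring
  have hlogS : Real.log x ≤ 2*(S-1) := by
    have hsq : S^2 = (x:ℝ) := Real.sq_sqrt hxpos.le
    have := Real.log_le_sub_one_of_pos hSpos
    calc Real.log x = Real.log (S^2) := by rw [hsq]
    _ = 2 * Real.log S := by rw [Real.log_pow]; norm_num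
    _ ≤ 2*(S-1) := by linarith
  have hLS : 2*((L:ℝ)+2) ≤ 4*S := by linarith
  -- bound the geometric part
  have hrm1 : (0.64:ℝ) ≤ r - 1 := by linarith
  have hgb : (r^(L+2) - 1)/(r-1) ≤ (Real.exp 1 * S)/0.64 := by
    have h1 : (r^(L+2) - 1)/(r-1) ≤ (Real.exp 1 * S)/(r-1) := by
      apply div_le_div_of_nonneg_right ?_ (by linarith)
      · linarith
    have h2 : (Real.exp 1 * S)/(r-1) ≤ (Real.exp 1 * S)/0.64 := by
      apply div_le_div_of_nonneg_left (by positivity) (by norm_num) hrm1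
    linarith
  have hpig : (3.141592:ℝ) < Real.pi := Real.pi_gt_d6
  have hpil : Real.pi < 3.141593 := Real.pi_lt_d6
  calc geomQueries x ≤ (Real.pi/4) * ((r^(L+2) - 1)/(r-1)) + 2*((L:ℕ)+2) := by
        rw [← hgeom]; exact_mod_cast hsum
  _ ≤ (Real.pi/4) * ((Real.exp 1 * S)/0.64) + 4*S := by
        have := mul_le_mul_of_nonneg_left hgb (by positivity : (0:ℝ) ≤ Real.pi/4)
        linarith
  _ ≤ Real.pi * Real.exp 1 * S := by
        have hpe : (8.53:ℝ) ≤ Real.pi * Real.exp 1 := by nlinarith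
        have key : Real.pi/4 * (Real.exp 1 * S/0.64)
            = (25/64) * (Real.pi * Real.exp 1 * S) := by ring
        rw [key]
        nlinarith [mul_le_mul_of_nonneg_right hpe hSpos.le]
end

section
/- Let k < 0 be real and define S_j(n) = Σ_{x=1}^n x^j (real powers). Then the ratio Q(n) = S_{k+1/2}(n)/S_k(n) satisfies: Q(n) = Θ(√n) if −1 < k < 0; Q(n) = Θ(√n/ln n) if k = −1; Q(n) = Θ(n^{k+3/2}) if −3/2 < k < −1; Q(n) = Θ(ln n) if k = −3/2; and Q(n) = Θ(1) if k < −3/2. -/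
open Finset

/-- `f(n) = Θ(g(n))`: there exist constants `c, C > 0` and `N` such that
`c·g n ≤ f n ≤ C·g n` for all `n ≥ N`. -/
def IsBigTheta (f g : ℕ → ℝ) : Prop :=
  ∃ c C : ℝ, ∃ N : ℕ, 0 < c ∧ 0 < C ∧ ∀ n ≥ N, c * g n ≤ f n ∧ f n ≤ C * g n

/-- `S_j(n) = Σ_{x=1}^n x^j` (real powers). -/
noncomputable def powSum (j : ℝ) (n : ℕ) : ℝ :=
  ∑ x ∈ Finset.Icc 1 n, (x : ℝ) ^ j

/-! ### Auxiliary lemmas -/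

lemma one_le_powSum (j : ℝ) {n : ℕ} (hn : 1 ≤ n) : 1 ≤ powSum j n := by
  have h1 : (1 : ℕ) ∈ Finset.Icc 1 n := by simp [hn]
  have := Finset.single_le_sum (f := fun x : ℕ => (x : ℝ) ^ j)
    (fun i _ => Real.rpow_nonneg (Nat.cast_nonneg i) j) h1
  simpa [powSum, Real.one_rpow] using this

/-- MVT consequence: for `0 < p ≤ 1` and `1 ≤ a`, `p * (a+1)^(p-1) ≤ (a+1)^p - a^p`. -/
lemma rpow_mvt {p : ℝ} (hp : 0 < p) (hp1 : p ≤ 1) {a : ℝ} (ha : 1 ≤ a) :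
    p * (a + 1) ^ (p - 1) ≤ (a + 1) ^ p - a ^ p := by
  have hab : a < a + 1 := by linarith
  have hcont : ContinuousOn (fun t : ℝ => t ^ p) (Set.Icc a (a + 1)) := by
    intro t ht
    exact (Real.continuousAt_rpow_const t p (Or.inr hp.le)).continuousWithinAt
  have hderiv : ∀ t ∈ Set.Ioo a (a + 1),
      HasDerivAt (fun t : ℝ => t ^ p) (p * t ^ (p - 1)) t := by
    intro t ht
    have ht0 : (0 : ℝ) < t := lt_of_lt_of_le one_pos (le_trans ha ht.1.le)
    exact Real.hasDerivAt_rpow_const (Or.inl ht0.ne')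
  obtain ⟨c, hc, hceq⟩ := exists_hasDerivAt_eq_slope (fun t : ℝ => t ^ p)
    (fun t => p * t ^ (p - 1)) hab hcont hderiv
  have hc0 : (0 : ℝ) < c := lt_of_lt_of_le one_pos (le_trans ha hc.1.le)
  have hle : (a + 1) ^ (p - 1) ≤ c ^ (p - 1) :=
    Real.rpow_le_rpow_of_nonpos hc0 hc.2.le (by linarith)
  have : p * (a + 1) ^ (p - 1) ≤ p * c ^ (p - 1) :=
    mul_le_mul_of_nonneg_left hle hp.le
  calc p * (a + 1) ^ (p - 1) ≤ p * c ^ (p - 1) := this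
    _ = ((a + 1) ^ p - a ^ p) / ((a + 1) - a) := hceq
    _ = (a + 1) ^ p - a ^ p := by norm_num

/-- Upper bound of `powSum j n` for `-1 < j`. -/
lemma powSum_upper {j : ℝ} (hj : -1 < j) :
    ∃ C : ℝ, 0 < C ∧ ∀ n : ℕ, 1 ≤ n → powSum j n ≤ C * (n : ℝ) ^ (j + 1) := by
  rcases le_or_gt 0 j with hj0 | hj0
  · refine ⟨1, one_pos, fun n hn => ?_⟩
    have hbound : ∀ x ∈ Finset.Icc 1 n, (x : ℝ) ^ j ≤ (n : ℝ) ^ j := by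
      intro x hx
      exact Real.rpow_le_rpow (Nat.cast_nonneg x)
        (Nat.cast_le.mpr (Finset.mem_Icc.mp hx).2) hj0
    have := Finset.sum_le_card_nsmul (Finset.Icc 1 n) _ _ hbound
    have hcard : (Finset.Icc 1 n).card = n := by
      rw [Nat.card_Icc]; omega
    have hne : ((n : ℝ)) ≠ 0 := by positivity
    calc powSum j n ≤ (Finset.Icc 1 n).card • ((n : ℝ) ^ j) := this
      _ = (n : ℝ) * (n : ℝ) ^ j := by rw [hcard, nsmul_eq_mul]
      _ = 1 * (n : ℝ) ^ (j + 1) := by rw [Real.rpow_add_one hne]; ring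
  · set p := j + 1 with hpdef
    have hp : 0 < p := by simp [hpdef]; linarith
    have hp1 : p ≤ 1 := by simp [hpdef]; linarith
    refine ⟨1 + 1 / p, by positivity, fun n hn => ?_⟩
    have key : ∀ n : ℕ, 1 ≤ n → powSum j n ≤ 1 + ((n : ℝ) ^ p - 1) / p := by
      intro n hn
      induction n with
      | zero => omega
      | succ m ih =>
        rcases Nat.eq_or_lt_of_le hn with h1 | h1
        · have : m = 0 := by omega
          subst this
          norm_num [powSum, Real.one_rpow]
        · have hm : 1 ≤ m := by omega
          have ihm := ih hm
          have hsplit : powSum j (m + 1) = powSum j m + ((m : ℝ) + 1) ^ j := by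
            unfold powSum
            rw [← Finset.insert_Icc_right_eq_Icc_add_one (by omega), Finset.sum_insert (by simp)]
            push_cast
            ring
          have hmvt : p * ((m : ℝ) + 1) ^ (p - 1) ≤ ((m : ℝ) + 1) ^ p - (m : ℝ) ^ p :=
            rpow_mvt hp hp1 (by exact_mod_cast hm)
          have hpe : p - 1 = j := by simp [hpdef]
          rw [hpe] at hmvt
          have hstep : ((m : ℝ) + 1) ^ j ≤ (((m : ℝ) + 1) ^ p - (m : ℝ) ^ p) / p := by
            rw [le_div_iff₀ hp]
            linarith [hmvt]
          have : powSum j (m + 1) ≤ 1 + ((m : ℝ) ^ p - 1) / p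
              + (((m : ℝ) + 1) ^ p - (m : ℝ) ^ p) / p := by
            rw [hsplit]; exact add_le_add ihm hstep
          calc powSum j (m + 1) ≤ 1 + ((m : ℝ) ^ p - 1) / p
              + (((m : ℝ) + 1) ^ p - (m : ℝ) ^ p) / p := this
            _ = 1 + ((((m : ℕ) + 1 : ℕ) : ℝ) ^ p - 1) / p := by push_cast; ring
    have hkey := key n hn
    have h1n : (1 : ℝ) ≤ (n : ℝ) ^ p := Real.one_le_rpow (by exact_mod_cast hn) hp.le
    have hdiv : ((n : ℝ) ^ p - 1) / p ≤ (n : ℝ) ^ p / p := by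
      have := mul_le_mul_of_nonneg_right
        (show (n : ℝ) ^ p - 1 ≤ (n : ℝ) ^ p by linarith) (inv_nonneg.mpr hp.le)
      simpa [div_eq_mul_inv] using this
    calc powSum j n ≤ 1 + ((n : ℝ) ^ p - 1) / p := hkey
      _ ≤ (n : ℝ) ^ p + (n : ℝ) ^ p / p := by linarith
      _ = (1 + 1 / p) * (n : ℝ) ^ p := by ring

/-- Lower bound of `powSum j n` for any `j`. -/
lemma powSum_lower (j : ℝ) :
    ∃ c : ℝ, 0 < c ∧ ∀ n : ℕ, 1 ≤ n → c * (n : ℝ) ^ (j + 1) ≤ powSum j n := by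
  have h2 : (0 : ℝ) < (2 : ℝ) ^ (-j) := Real.rpow_pos_of_pos two_pos _
  refine ⟨min 1 ((2 : ℝ) ^ (-j)) / 2, by positivity, fun n hn => ?_⟩
  set m := (n + 1) / 2 with hmdef
  have hm1 : 1 ≤ m := by omega
  have hmn : m ≤ n := by omega
  have h2m : n ≤ 2 * m := by omega
  have hn0 : (0 : ℝ) < n := by exact_mod_cast hn
  have hmhalf : (n : ℝ) / 2 ≤ (m : ℝ) := by
    have : (n : ℝ) ≤ 2 * (m : ℝ) := by exact_mod_cast h2m
    linarith
  set b := min 1 ((2 : ℝ) ^ (-j)) * (n : ℝ) ^ j with hbdef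
  have hb0 : 0 ≤ b := by
    apply mul_nonneg (le_min zero_le_one h2.le) (Real.rpow_nonneg hn0.le j)
  have hbound : ∀ x ∈ Finset.Icc m n, b ≤ (x : ℝ) ^ j := by
    intro x hx
    obtain ⟨hx1, hx2⟩ := Finset.mem_Icc.mp hx
    have hxm : (m : ℝ) ≤ (x : ℝ) := by exact_mod_cast hx1
    have hxn : (x : ℝ) ≤ (n : ℝ) := by exact_mod_cast hx2
    have hx0 : (0 : ℝ) < x := lt_of_lt_of_le (by linarith) hxm
    rcases le_or_gt 0 j with hj0 | hj0
    · have h1 : (n : ℝ) / 2 ≤ (x : ℝ) := le_trans hmhalf hxm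
      have h2' : ((n : ℝ) / 2) ^ j ≤ (x : ℝ) ^ j :=
        Real.rpow_le_rpow (by positivity) h1 hj0
      have h3 : ((n : ℝ) / 2) ^ j = (n : ℝ) ^ j / (2 : ℝ) ^ j :=
        Real.div_rpow hn0.le (by norm_num) j
      have h4 : (2 : ℝ) ^ (-j) = ((2 : ℝ) ^ j)⁻¹ := Real.rpow_neg (by norm_num) j
      calc b ≤ (2 : ℝ) ^ (-j) * (n : ℝ) ^ j :=
            mul_le_mul_of_nonneg_right (min_le_right _ _) (Real.rpow_nonneg hn0.le j)
        _ = (n : ℝ) ^ j / (2 : ℝ) ^ j := by rw [h4]; ring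
        _ = ((n : ℝ) / 2) ^ j := h3.symm
        _ ≤ (x : ℝ) ^ j := h2'
    · have h1 : (n : ℝ) ^ j ≤ (x : ℝ) ^ j :=
        Real.rpow_le_rpow_of_nonpos hx0 hxn hj0.le
      calc b ≤ 1 * (n : ℝ) ^ j :=
            mul_le_mul_of_nonneg_right (min_le_left _ _) (Real.rpow_nonneg hn0.le j)
        _ = (n : ℝ) ^ j := one_mul _
        _ ≤ (x : ℝ) ^ j := h1
  have hsum1 : ∑ x ∈ Finset.Icc m n, (x : ℝ) ^ j ≤ powSum j n := by
    apply Finset.sum_le_sum_of_subset_of_nonneg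
    · apply Finset.Icc_subset_Icc_left hm1
    · intro i _ _; exact Real.rpow_nonneg (Nat.cast_nonneg i) j
  have hsum2 := Finset.card_nsmul_le_sum (Finset.Icc m n) (fun x : ℕ => (x : ℝ) ^ j) b hbound
  have hcard : (Finset.Icc m n).card = n + 1 - m := Nat.card_Icc m n
  have hcardR : (n : ℝ) / 2 ≤ ((Finset.Icc m n).card : ℝ) := by
    rw [hcard]
    have : ((n + 1 - m : ℕ) : ℝ) = (n : ℝ) + 1 - (m : ℝ) := by
      have : m ≤ n + 1 := by omega
      push_cast [Nat.cast_sub this]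
      ring
    rw [this]
    have hm2 : (m : ℝ) ≤ ((n : ℝ) + 1) / 2 := by
      have : 2 * m ≤ n + 1 := by omega
      have := (Nat.cast_le (α := ℝ)).mpr this
      push_cast at this
      linarith
    linarith
  have hfinal : min 1 ((2 : ℝ) ^ (-j)) / 2 * (n : ℝ) ^ (j + 1) ≤ ((Finset.Icc m n).card : ℝ) * b := by
    have hrw : (n : ℝ) ^ (j + 1) = (n : ℝ) ^ j * (n : ℝ) := Real.rpow_add_one hn0.ne' j
    rw [hrw, hbdef]
    have := mul_le_mul_of_nonneg_right hcardR hb0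
    calc min 1 ((2 : ℝ) ^ (-j)) / 2 * ((n : ℝ) ^ j * (n : ℝ))
        = (n : ℝ) / 2 * (min 1 ((2 : ℝ) ^ (-j)) * (n : ℝ) ^ j) := by ring
      _ ≤ ((Finset.Icc m n).card : ℝ) * (min 1 ((2 : ℝ) ^ (-j)) * (n : ℝ) ^ j) := this
  calc min 1 ((2 : ℝ) ^ (-j)) / 2 * (n : ℝ) ^ (j + 1)
      ≤ ((Finset.Icc m n).card : ℝ) * b := hfinal
    _ = (Finset.Icc m n).card • b := (nsmul_eq_mul _ _).symm
    _ ≤ ∑ x ∈ Finset.Icc m n, (x : ℝ) ^ j := hsum2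
    _ ≤ powSum j n := hsum1

lemma isBigTheta_powSum_rpow {j : ℝ} (hj : -1 < j) :
    IsBigTheta (powSum j) (fun n => (n : ℝ) ^ (j + 1)) := by
  obtain ⟨c, hc, hlow⟩ := powSum_lower j
  obtain ⟨C, hC, hup⟩ := powSum_upper hj
  exact ⟨c, C, 1, hc, hC, fun n hn => ⟨hlow n hn, hup n hn⟩⟩

lemma powSum_neg_one (n : ℕ) : powSum (-1) n = ((harmonic n : ℚ) : ℝ) := by
  rw [harmonic_eq_sum_Icc]
  push_cast
  unfold powSum
  exact Finset.sum_congr rfl fun x _ => Real.rpow_neg_one x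

lemma isBigTheta_powSum_log :
    IsBigTheta (powSum (-1)) (fun n => Real.log n) := by
  refine ⟨1, 2, 3, one_pos, two_pos, fun n hn => ?_⟩
  have hn3 : (3 : ℝ) ≤ (n : ℝ) := by exact_mod_cast hn
  have hlog1 : 1 ≤ Real.log n := by
    rw [Real.le_log_iff_exp_le (by linarith)]
    calc Real.exp 1 ≤ 2.7182818286 := Real.exp_one_lt_d9.le
      _ ≤ (n : ℝ) := by linarith
  rw [powSum_neg_one]
  constructor
  · have h1 : Real.log n ≤ Real.log ((n : ℝ) + 1) := by
      apply Real.log_le_log (by linarith) (by linarith)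
    have h2 := log_add_one_le_harmonic n
    push_cast at h2 ⊢
    linarith
  · have h2 := harmonic_le_one_add_log n
    push_cast at h2 ⊢
    linarith

lemma isBigTheta_powSum_one {j : ℝ} (hj : j < -1) :
    IsBigTheta (powSum j) (fun _ => (1 : ℝ)) := by
  have hsummable : Summable (fun x : ℕ => (x : ℝ) ^ j) := Real.summable_nat_rpow.mpr hj
  set C := ∑' x : ℕ, (x : ℝ) ^ j with hCdef
  have hub : ∀ n : ℕ, powSum j n ≤ C := by
    intro n
    exact Summable.sum_le_tsum (Finset.Icc 1 n)
      (fun i _ => Real.rpow_nonneg (Nat.cast_nonneg i) j) hsummable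
  have hC : 0 < C := lt_of_lt_of_le one_pos ((one_le_powSum j le_rfl).trans (hub 1))
  exact ⟨1, C, 1, one_pos, hC, fun n hn => ⟨by simpa using one_le_powSum j hn,
    by simpa using hub n⟩⟩

lemma IsBigTheta.div {f g a b : ℕ → ℝ} {Ma Mb : ℕ}
    (hf : IsBigTheta f a) (hg : IsBigTheta g b)
    (ha : ∀ n ≥ Ma, 0 ≤ a n) (hb : ∀ n ≥ Mb, 0 < b n) :
    IsBigTheta (fun n => f n / g n) (fun n => a n / b n) := by
  obtain ⟨cf, Cf, Nf, hcf, hCf, hfb⟩ := hf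
  obtain ⟨cg, Cg, Ng, hcg, hCg, hgb⟩ := hg
  refine ⟨cf / Cg, Cf / cg, max (max Nf Ng) (max Ma Mb), div_pos hcf hCg,
    div_pos hCf hcg, fun n hn => ?_⟩
  obtain ⟨hfl, hfu⟩ := hfb n (by omega)
  obtain ⟨hgl, hgu⟩ := hgb n (by omega)
  have han := ha n (by omega)
  have hbn := hb n (by omega)
  have hg0 : 0 < g n := lt_of_lt_of_le (mul_pos hcg hbn) hgl
  have hf0 : 0 ≤ f n := le_trans (mul_nonneg hcf.le han) hfl
  constructor
  · have h1 : (cf * a n) / (Cg * b n) ≤ f n / g n :=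
      div_le_div₀ hf0 hfl hg0 hgu
    calc cf / Cg * (a n / b n) = (cf * a n) / (Cg * b n) :=
        div_mul_div_comm cf Cg (a n) (b n)
      _ ≤ f n / g n := h1
  · have h1 : f n / g n ≤ (Cf * a n) / (cg * b n) :=
      div_le_div₀ (mul_nonneg hCf.le han) hfu (mul_pos hcg hbn) hgl
    calc f n / g n ≤ (Cf * a n) / (cg * b n) := h1
      _ = Cf / cg * (a n / b n) := (div_mul_div_comm Cf cg (a n) (b n)).symm

lemma IsBigTheta.congr_right {f g h : ℕ → ℝ} {M : ℕ}
    (hgh : ∀ n ≥ M, g n = h n) (H : IsBigTheta f g) : IsBigTheta f h := by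
  obtain ⟨c, C, N, hc, hC, hb⟩ := H
  exact ⟨c, C, max N M, hc, hC, fun n hn => by
    rw [← hgh n (by omega)]; exact hb n (by omega)⟩

theorem quantum_power_law_complexity (k : ℝ) (hk : k < 0) :
    ((-1 < k ∧ k < 0) →
      IsBigTheta (fun n => powSum (k + 1/2) n / powSum k n)
        (fun n => Real.sqrt n)) ∧
    (k = -1 →
      IsBigTheta (fun n => powSum (k + 1/2) n / powSum k n)
        (fun n => Real.sqrt n / Real.log n)) ∧
    ((-3/2 < k ∧ k < -1) →
      IsBigTheta (fun n => powSum (k + 1/2) n / powSum k n)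
        (fun n => (n : ℝ) ^ (k + 3/2))) ∧
    (k = -3/2 →
      IsBigTheta (fun n => powSum (k + 1/2) n / powSum k n)
        (fun n => Real.log n)) ∧
    (k < -3/2 →
      IsBigTheta (fun n => powSum (k + 1/2) n / powSum k n) (fun _ => (1 : ℝ))) := by
  refine ⟨?_, ?_, ?_, ?_, ?_⟩
  · -- case -1 < k < 0
    rintro ⟨hk1, _⟩
    have hf : IsBigTheta (powSum (k + 1/2)) (fun n => (n : ℝ) ^ (k + 1/2 + 1)) :=
      isBigTheta_powSum_rpow (by linarith)
    have hg : IsBigTheta (powSum k) (fun n => (n : ℝ) ^ (k + 1)) :=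
      isBigTheta_powSum_rpow (by linarith)
    have hdiv := hf.div hg (Ma := 1) (Mb := 1)
      (fun n _ => Real.rpow_nonneg (Nat.cast_nonneg n) _)
      (fun n hn => Real.rpow_pos_of_pos (by exact_mod_cast hn) _)
    apply hdiv.congr_right (M := 1)
    intro n hn
    have hn0 : (0 : ℝ) < n := by exact_mod_cast hn
    rw [← Real.rpow_sub hn0]
    rw [show k + 1/2 + 1 - (k + 1) = 1/2 by ring, Real.sqrt_eq_rpow]
  · -- case k = -1
    rintro rfl
    have hf : IsBigTheta (powSum (-1 + 1/2)) (fun n => (n : ℝ) ^ ((-1 : ℝ) + 1/2 + 1)) :=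
      isBigTheta_powSum_rpow (by norm_num)
    have hg : IsBigTheta (powSum (-1)) (fun n => Real.log n) := isBigTheta_powSum_log
    have hdiv := hf.div hg (Ma := 1) (Mb := 3)
      (fun n _ => Real.rpow_nonneg (Nat.cast_nonneg n) _)
      (fun n hn => Real.log_pos (by
        have : (3 : ℝ) ≤ (n : ℝ) := by exact_mod_cast hn
        linarith))
    apply hdiv.congr_right (M := 1)
    intro n hn
    have hn0 : (0 : ℝ) ≤ n := Nat.cast_nonneg n
    rw [Real.sqrt_eq_rpow]
    norm_num
  · -- case -3/2 < k < -1
    rintro ⟨hk1, hk2⟩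
    have hf : IsBigTheta (powSum (k + 1/2)) (fun n => (n : ℝ) ^ (k + 1/2 + 1)) :=
      isBigTheta_powSum_rpow (by linarith)
    have hg : IsBigTheta (powSum k) (fun _ => (1 : ℝ)) :=
      isBigTheta_powSum_one (by linarith)
    have hdiv := hf.div hg (Ma := 1) (Mb := 1)
      (fun n _ => Real.rpow_nonneg (Nat.cast_nonneg n) _)
      (fun n _ => one_pos)
    apply hdiv.congr_right (M := 1)
    intro n hn
    rw [div_one, show k + 1/2 + 1 = k + 3/2 by ring]
  · -- case k = -3/2
    rintro rfl
    have he : (-3/2 + 1/2 : ℝ) = -1 := by norm_num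
    have hf : IsBigTheta (powSum (-3/2 + 1/2)) (fun n => Real.log n) := by
      rw [he]; exact isBigTheta_powSum_log
    have hg : IsBigTheta (powSum (-3/2)) (fun _ => (1 : ℝ)) :=
      isBigTheta_powSum_one (by norm_num)
    have hdiv := hf.div hg (Ma := 3) (Mb := 1)
      (fun n hn => Real.log_nonneg (by exact_mod_cast (by omega : 1 ≤ n)))
      (fun n _ => one_pos)
    apply hdiv.congr_right (M := 1)
    intro n hn
    rw [div_one]
  · -- case k < -3/2
    intro hk2
    have hf : IsBigTheta (powSum (k + 1/2)) (fun _ => (1 : ℝ)) :=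
      isBigTheta_powSum_one (by linarith)
    have hg : IsBigTheta (powSum k) (fun _ => (1 : ℝ)) :=
      isBigTheta_powSum_one (by linarith)
    have hdiv := hf.div hg (Ma := 1) (Mb := 1)
      (fun n _ => zero_le_one) (fun n _ => one_pos)
    apply hdiv.congr_right (M := 1)
    intro n hn
    norm_num
end

section
/- For every real p with 0 < p < 1 and every natural number m ≥ 1 satisfying m ≥ 1/(2·√(p(1−p))), it holds that 1/2 − sin(4m·arcsin √p)/(8m·√(p(1−p))) ≥ 1/4. -/
theorem amplitude_amplification_success_prob (p : ℝ) (hp0 : 0 < p) (hp1 : p < 1)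
    (m : ℕ) (hm : 1 ≤ m) (hm2 : 1 / (2 * Real.sqrt (p * (1 - p))) ≤ (m : ℝ)) :
    1 / 4 ≤ 1 / 2 -
      Real.sin (4 * m * Real.arcsin (Real.sqrt p)) /
        (8 * m * Real.sqrt (p * (1 - p))) := by
  set s := Real.sqrt (p * (1 - p)) with hs
  have hspos : 0 < s := Real.sqrt_pos.mpr (by nlinarith)
  have h4 : (4 : ℝ) ≤ 8 * m * s := by
    have := (div_le_iff₀ (by positivity : (0:ℝ) < 2 * s)).mp hm2
    nlinarith
  have hden : (0 : ℝ) < 8 * m * s := by linarith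
  have hsin : Real.sin (4 * m * Real.arcsin (Real.sqrt p)) ≤ 1 := Real.sin_le_one _
  have : Real.sin (4 * m * Real.arcsin (Real.sqrt p)) / (8 * m * s) ≤ 1 / 4 := by
    rw [div_le_div_iff₀ hden (by norm_num)]
    nlinarith
  linarith
end

section
/- For every real k with 1 < k < 4/3 and every natural number j ≥ 1, Σ_{i=0}^{j−1} (⌊k^i⌋ + 3)/2 ≤ k^j/(k−1). -/
open Finset

lemma cast_prod_nonneg (n : ℕ) : 0 ≤ (n:ℝ) * ((n:ℝ)-1) * ((n:ℝ)-2) := by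
  rcases n with _|_|n
  · norm_num
  · norm_num
  · push_cast
    have h : (0:ℝ) ≤ (n:ℝ) := Nat.cast_nonneg n
    nlinarith [mul_nonneg (mul_nonneg h h) h, mul_nonneg h h]

lemma cubic_binom (n : ℕ) (ε : ℝ) (hε : 0 ≤ ε) :
    1 + n*ε + n*(n-1)/2*ε^2 + n*(n-1)*(n-2)/6*ε^3 ≤ (1+ε)^n := by
  induction n with
  | zero => norm_num
  | succ n ih =>
    have h1 : (0:ℝ) ≤ (n:ℝ) * ((n:ℝ)-1) * ((n:ℝ)-2) := cast_prod_nonneg n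
    have h2 : (0:ℝ) ≤ 1 + ε := by linarith
    have := mul_le_mul_of_nonneg_left ih h2
    calc 1 + (n+1:ℕ)*ε + (n+1:ℕ)*((n+1:ℕ)-1)/2*ε^2 + (n+1:ℕ)*((n+1:ℕ)-1)*((n+1:ℕ)-2)/6*ε^3
        ≤ (1+ε) * (1 + n*ε + n*(n-1)/2*ε^2 + n*(n-1)*(n-2)/6*ε^3) := by
          push_cast
          nlinarith [mul_nonneg h1 (pow_nonneg hε 4)]
      _ ≤ (1+ε) * (1+ε)^n := this
      _ = (1+ε)^(n+1) := by ring

lemma key (n : ℕ) (ε : ℝ) (hε : 0 < ε) (hε3 : ε < 1/3) :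
    3 * n * ε ≤ (1+ε)^n + 1 := by
  have hb := cubic_binom n ε hε.le
  have hq : (0:ℝ) ≤ (n:ℝ) * ((n:ℝ)-1) := by
    rcases n with _|n
    · norm_num
    · push_cast; nlinarith [Nat.cast_nonneg (α := ℝ) n]
  have hc : (0:ℝ) ≤ (n:ℝ) * ((n:ℝ)-1) * ((n:ℝ)-2) := cast_prod_nonneg n
  by_cases h : (n:ℝ) * ε ≤ 1
  · nlinarith [mul_nonneg hq (sq_nonneg ε), mul_nonneg hc (pow_nonneg hε.le 3)]
  · push_neg at h
    have hx : (0:ℝ) < (n:ℝ) * ε := by linarith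
    have he : (0:ℝ) ≤ 1/3 - ε := by linarith
    have ht : (0:ℝ) ≤ (n:ℝ)*ε - 1 := by linarith
    nlinarith [mul_nonneg hx.le he, mul_nonneg (sq_nonneg ((n:ℝ)*ε)) he,
      mul_nonneg hx.le (sq_nonneg ε),
      sq_nonneg ((n:ℝ)*ε - 8/5), mul_nonneg (mul_nonneg ht ht) ht]

theorem exponential_search_partial_cost (k : ℝ) (hk1 : 1 < k) (hk2 : k < 4/3)
    (j : ℕ) (hj : 1 ≤ j) :
    ∑ i ∈ Finset.range j, (((⌊k ^ (i : ℝ)⌋ : ℤ) : ℝ) + 3) / 2 ≤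
      k ^ (j : ℝ) / (k - 1) := by
  have hk1' : (0:ℝ) < k - 1 := by linarith
  simp only [Real.rpow_natCast]
  have h1 : ∑ i ∈ Finset.range j, (((⌊k ^ i⌋ : ℤ) : ℝ) + 3) / 2 ≤
      ∑ i ∈ Finset.range j, (k ^ i + 3) / 2 := by
    refine Finset.sum_le_sum fun i _ => ?_
    have h := Int.floor_le (k ^ i)
    linarith
  have hgeom : ∑ i ∈ Finset.range j, k ^ i = (k ^ j - 1) / (k - 1) :=
    geom_sum_eq (by linarith) j
  have hsum : ∑ i ∈ Finset.range j, (k ^ i + 3) / 2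
      = (k ^ j - 1) / (k - 1) / 2 + 3 * j / 2 := by
    rw [← Finset.sum_div, Finset.sum_add_distrib, Finset.sum_const, card_range, hgeom]
    push_cast; ring
  have hkey := key j (k - 1) (by linarith) (by linarith)
  have hk : 1 + (k - 1) = k := by ring
  rw [hk] at hkey
  have hpos : 0 ≤ (k ^ j + 1 - 3 * j * (k - 1)) / (2 * (k - 1)) :=
    div_nonneg (by linarith) (by linarith)
  have hdiff : k ^ j / (k - 1) - ((k ^ j - 1) / (k - 1) / 2 + 3 * (j:ℝ) / 2)
      = (k ^ j + 1 - 3 * j * (k - 1)) / (2 * (k - 1)) := by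
    field_simp
    ring
  rw [hsum] at h1
  linarith
end

section
/- For every real k with 1 < k < 4/3 and every natural number n ≥ 1, Σ_{j=1}^{⌊log_k √n⌋ + 1} k^j/(k−1) + ⌈(π/4)·√n⌉ ≤ (k²/(k−1)² + π/4)·√n. -/
open Finset

theorem worst_case_query_bound (k : ℝ) (hk1 : 1 < k) (hk2 : k < 4/3)
    (n : ℕ) (hn : 1 ≤ n) :
    (∑ j ∈ Finset.Icc 1 (⌊Real.log (Real.sqrt n) / Real.log k⌋.toNat + 1),
        k ^ (j : ℝ) / (k - 1)) +
      ((⌈(Real.pi / 4) * Real.sqrt n⌉ : ℤ) : ℝ) ≤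
      (k ^ 2 / (k - 1) ^ 2 + Real.pi / 4) * Real.sqrt n := by
  set s := Real.sqrt n with hsdef
  have hs : 1 ≤ s := by
    rw [hsdef, show (1:ℝ) = Real.sqrt 1 by simp]
    exact Real.sqrt_le_sqrt (by exact_mod_cast hn)
  set x := Real.log s / Real.log k with hxdef
  have hlogk : 0 < Real.log k := Real.log_pos hk1
  have hx0 : 0 ≤ x := div_nonneg (Real.log_nonneg hs) hlogk.le
  set m := (⌊x⌋).toNat with hmdef
  have hm : (m : ℝ) ≤ x := by
    rw [hmdef]
    rw [show ((⌊x⌋.toNat : ℕ) : ℝ) = ((⌊x⌋.toNat : ℤ) : ℝ) by push_cast; ring]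
    rw [Int.toNat_of_nonneg (Int.floor_nonneg.2 hx0)]
    exact Int.floor_le x
  -- k ^ m ≤ s
  have hkm : k ^ m ≤ s := by
    have h1 : (k : ℝ) ^ (m : ℝ) ≤ k ^ x :=
      Real.rpow_le_rpow_of_exponent_le hk1.le hm
    have h2 : k ^ x = s := by
      rw [hxdef]
      have : Real.log s / Real.log k * Real.log k = Real.log s := by
        field_simp
      rw [Real.rpow_def_of_pos (by linarith), mul_comm, this,
        Real.exp_log (by linarith)]
    rw [Real.rpow_natCast] at h1
    linarith [h1, h2.symm ▸ h1]
  have hk1' : (0:ℝ) < k - 1 := by linarith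
  -- rewrite sum
  have hsum : (∑ j ∈ Finset.Icc 1 (m + 1), k ^ (j : ℝ) / (k - 1))
      = (k ^ (m + 2) - k) / ((k - 1) * (k - 1)) := by
    have h1 : (∑ j ∈ Finset.Icc 1 (m + 1), k ^ (j : ℝ) / (k - 1))
        = (∑ j ∈ Finset.Icc 1 (m + 1), k ^ j) / (k - 1) := by
      rw [Finset.sum_div]
      exact Finset.sum_congr rfl fun j _ => by rw [Real.rpow_natCast]
    rw [h1, show Finset.Icc 1 (m + 1) = Finset.Ico 1 (m + 2) by rfl,
      geom_sum_Ico (by linarith : k ≠ 1) (by omega)]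
    rw [div_div]
    ring_nf
  rw [hsum]
  have hceil : ((⌈(Real.pi / 4) * s⌉ : ℤ) : ℝ) < (Real.pi / 4) * s + 1 :=
    Int.ceil_lt_add_one _
  have hkm2 : k ^ (m + 2) ≤ k ^ 2 * s := by
    have : k ^ (m + 2) = k ^ 2 * k ^ m := by ring
    rw [this]
    have : (0:ℝ) < k ^ 2 := by positivity
    nlinarith [hkm]
  have hslack : (k - 1) * (k - 1) ≤ k := by nlinarith
  have hd : (0:ℝ) < (k - 1) * (k - 1) := by positivity
  have key : (k ^ (m + 2) - k) / ((k - 1) * (k - 1))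
      ≤ (k ^ 2 * s - (k - 1) * (k - 1)) / ((k - 1) * (k - 1)) := by
    gcongr
  have heq : (k ^ 2 * s - (k - 1) * (k - 1)) / ((k - 1) * (k - 1))
      = k ^ 2 / (k - 1) ^ 2 * s - 1 := by
    field_simp
  rw [heq] at key
  linarith [hceil, key]
end

section
/- For every real k with 1 < k < 4/3, every natural number n ≥ 1, and every real P with 1/n ≤ P ≤ 1, it holds that (3/4)^{log_k √n − log_k(1/√P) − 1} · ((k/(k−1) + π/4)·√n + 1) ≤ (4k/(3(k−1)) + π/3)·(1/√P) + 4/3. -/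
/-! Write `x = √n · √P`, so that `P ≥ 1/n` gives `x ≥ 1` and the exponent is `log_k x - 1`.
Since `3/4 ≤ 1/k` and `log_k x ≥ 0`, `(3/4)^(log_k x) ≤ (1/k)^(log_k x) = 1/x`.
The left-hand side is then at most `(4/3) · (C √n + 1) / (√n √P) ≤ (4/3) · (C / √P + 1)` with `C = k/(k-1) + π/4`,
which is the right-hand side. -/

namespace Real

lemma rpow_logb_le_inv {k c x : ℝ} (hk : 1 < k) (hc : 0 < c) (hck : k ≤ c⁻¹) (hx : 1 ≤ x) :
    c ^ logb k x ≤ x⁻¹ := by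
  have hlogk : 0 < log k := log_pos hk
  have hlogc : log k ≤ -log c := by
    rw [← log_inv]
    exact log_le_log (by linarith) hck
  rw [← exp_log (inv_pos.mpr (by linarith : (0 : ℝ) < x)), rpow_def_of_pos hc, exp_le_exp,
    log_inv, logb, mul_comm, div_mul_eq_mul_div, div_le_iff₀ hlogk]
  nlinarith [log_nonneg hx]

lemma one_le_sqrt_mul_sqrt {x P : ℝ} (hx : 0 < x) (hP : 1 / x ≤ P) : 1 ≤ √x * √P := by
  rw [← sqrt_mul hx.le, one_le_sqrt]
  rwa [div_le_iff₀ hx, mul_comm] at hP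

end Real

lemma mul_mul_add_one_le_div_add_one {t C a b : ℝ} (ha : 0 < a) (hb : 0 < b) (hC : 0 ≤ C)
    (hab : 1 ≤ a * b) (ht : t ≤ (a * b)⁻¹) : t * (C * a + 1) ≤ C / b + 1 :=
  calc t * (C * a + 1)
      ≤ (a * b)⁻¹ * (C * a + 1) := by gcongr
    _ = C / b + (a * b)⁻¹ := by field_simp
    _ ≤ C / b + 1 := by gcongr; exact inv_le_one_of_one_le₀ hab

theorem final_grover_step_bound_general (k : ℝ) (hk1 : 1 < k) (hk2 : k < 4/3)
    (n : ℕ) (hn : 1 ≤ n) (P : ℝ) (hP1 : 1 / (n : ℝ) ≤ P) :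
    (3/4 : ℝ) ^ (Real.log (Real.sqrt n) / Real.log k -
        Real.log (1 / Real.sqrt P) / Real.log k - 1) *
      ((k / (k - 1) + Real.pi / 4) * Real.sqrt n + 1) ≤
      (4 * k / (3 * (k - 1)) + Real.pi / 3) * (1 / Real.sqrt P) + 4/3 := by
  have hn0 : (0 : ℝ) < n := by exact_mod_cast hn
  have hP0 : 0 < P := lt_of_lt_of_le (by positivity) hP1
  have hsqrt_n : 0 < √(n : ℝ) := Real.sqrt_pos.mpr hn0
  have hsqrt_P : 0 < √P := Real.sqrt_pos.mpr hP0
  have hx : 1 ≤ √(n : ℝ) * √P := Real.one_le_sqrt_mul_sqrt hn0 hP1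
  have hC : 0 ≤ k / (k - 1) + Real.pi / 4 := by
    have : 0 < k / (k - 1) := div_pos (by linarith) (by linarith)
    positivity
  have hexp : Real.log √(n : ℝ) / Real.log k - Real.log (1 / √P) / Real.log k
      = Real.logb k (√(n : ℝ) * √P) := by
    rw [Real.log_div_log, Real.log_div_log, one_div, Real.logb_inv,
      Real.logb_mul hsqrt_n.ne' hsqrt_P.ne']
    ring
  have hdecay := Real.rpow_logb_le_inv hk1 (by norm_num : (0 : ℝ) < 3/4) (by linarith) hx
  calc _ = 4/3 * ((3/4 : ℝ) ^ Real.logb k (√(n : ℝ) * √P)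
          * ((k / (k - 1) + Real.pi / 4) * √(n : ℝ) + 1)) := by
        rw [hexp, Real.rpow_sub_one (by norm_num)]
        ring
    _ ≤ 4/3 * ((k / (k - 1) + Real.pi / 4) / √P + 1) := by
        gcongr
        exact mul_mul_add_one_le_div_add_one hsqrt_n hsqrt_P hC hx hdecay
    _ = _ := by
        have : k - 1 ≠ 0 := by linarith
        field_simp

theorem final_grover_step_bound (k : ℝ) (hk1 : 1 < k) (hk2 : k < 4/3)
    (n : ℕ) (hn : 1 ≤ n) (P : ℝ) (hP1 : 1 / (n : ℝ) ≤ P) (hP2 : P ≤ 1) :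
    (3/4 : ℝ) ^ (Real.log (Real.sqrt n) / Real.log k -
        Real.log (1 / Real.sqrt P) / Real.log k - 1) *
      ((k / (k - 1) + Real.pi / 4) * Real.sqrt n + 1) ≤
      (4 * k / (3 * (k - 1)) + Real.pi / 3) * (1 / Real.sqrt P) + 4/3 :=
  final_grover_step_bound_general k hk1 hk2 n hn P hP1
end

section
/- For every real k with 1 < k < 4/3 and every natural number n ≥ 1, setting J = ⌊log_k √n⌋, it holds that (3/4)·Σ_{j=0}^{J} (1/4)^j·(1 + k^j/(k−1)) + (1/4)^{J+1}·(k^{J+1}/(k−1) + (π/4)·√n + 1) ≤ 3/((k−1)(4−k)) + k/(k−1) + 2 + π/4. -/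
open Finset

private lemma geom_bound (r : ℝ) (h0 : 0 ≤ r) (h1 : r < 1) (m : ℕ) :
    ∑ j ∈ Finset.range m, r ^ j ≤ 1 / (1 - r) := by
  have hne : r ≠ 1 := ne_of_lt h1
  have h : (r ^ m - 1) / (r - 1) = (1 - r ^ m) / (1 - r) := by
    rw [← neg_sub 1 (r ^ m), ← neg_sub 1 r, neg_div_neg_eq]
  rw [geom_sum_eq hne, h]
  have hr : (0:ℝ) < 1 - r := by linarith
  gcongr
  nlinarith [pow_nonneg h0 m]

theorem high_probability_case_bound (k : ℝ) (hk1 : 1 < k) (hk2 : k < 4/3)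
    (n : ℕ) (hn : 1 ≤ n) :
    (3/4 : ℝ) *
        (∑ j ∈ Finset.range (⌊Real.log (Real.sqrt n) / Real.log k⌋.toNat + 1),
          (1/4 : ℝ) ^ j * (1 + k ^ (j : ℝ) / (k - 1))) +
      (1/4 : ℝ) ^ (⌊Real.log (Real.sqrt n) / Real.log k⌋.toNat + 1) *
        (k ^ ((⌊Real.log (Real.sqrt n) / Real.log k⌋.toNat + 1 : ℕ) : ℝ) / (k - 1) +
          (Real.pi / 4) * Real.sqrt n + 1) ≤
      3 / ((k - 1) * (4 - k)) + k / (k - 1) + 2 + Real.pi / 4 := by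
  have hk0 : (0:ℝ) < k - 1 := by linarith
  have h4k : (0:ℝ) < 4 - k := by linarith
  set L := Real.log (Real.sqrt n) / Real.log k with hL
  set m : ℕ := ⌊L⌋.toNat + 1 with hm
  -- sum bound
  have hpt : ∀ j ∈ Finset.range m, (1/4:ℝ) ^ j * (1 + k ^ (j:ℝ) / (k - 1)) =
      (1/4:ℝ) ^ j + (1/(k-1)) * (k/4) ^ j := by
    intro j _
    rw [Real.rpow_natCast]
    ring
  have h1 : ∑ j ∈ Finset.range m, (1/4:ℝ) ^ j ≤ 4/3 := by
    have := geom_bound (1/4) (by norm_num) (by norm_num) m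
    linarith [this]
  have h2 : ∑ j ∈ Finset.range m, (k/4:ℝ) ^ j ≤ 4 / (4 - k) := by
    have := geom_bound (k/4) (by linarith) (by linarith) m
    have he : 1 / (1 - k/4) = 4 / (4 - k) := by
      rw [div_eq_div_iff (by linarith) (by linarith)]; ring
    linarith [he ▸ this]
  have hsum : ∑ j ∈ Finset.range m, (1/4:ℝ) ^ j * (1 + k ^ (j:ℝ) / (k - 1)) ≤
      4/3 + (1/(k-1)) * (4/(4-k)) := by
    rw [Finset.sum_congr rfl hpt, Finset.sum_add_distrib, ← Finset.mul_sum]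
    have : (1/(k-1)) * ∑ j ∈ Finset.range m, (k/4:ℝ) ^ j ≤ (1/(k-1)) * (4/(4-k)) :=
      mul_le_mul_of_nonneg_left h2 (by positivity)
    linarith
  -- second term bound
  have hsqrt_pos : (0:ℝ) < Real.sqrt n := Real.sqrt_pos.mpr (by exact_mod_cast Nat.pos_of_ne_zero (by omega))
  have hlogk : 0 < Real.log k := Real.log_pos hk1
  have hLm : L < (m : ℕ) := by
    have h1 : L < (⌊L⌋ : ℝ) + 1 := Int.lt_floor_add_one L
    have h2 : (⌊L⌋ : ℝ) ≤ (⌊L⌋.toNat : ℝ) := by exact_mod_cast Int.self_le_toNat ⌊L⌋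
    push_cast [hm]
    linarith
  have hsn : Real.sqrt n < k ^ m := by
    have hlog : Real.log (Real.sqrt n) < Real.log (k ^ m) := by
      rw [Real.log_pow]
      have : L * Real.log k < (m:ℝ) * Real.log k :=
        mul_lt_mul_of_pos_right hLm hlogk
      rw [hL, div_mul_cancel₀ _ (ne_of_gt hlogk)] at this
      exact this
    exact (Real.log_lt_log_iff hsqrt_pos (pow_pos (by linarith) m)).mp hlog
  have hsn4 : Real.sqrt n ≤ (4:ℝ) ^ m :=
    le_of_lt (hsn.trans_le (pow_le_pow_left₀ (by linarith) (by linarith) m))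
  have hq4 : (1/4:ℝ) ^ m * (4:ℝ) ^ m = 1 := by
    rw [← mul_pow]; norm_num
  have hqpos : (0:ℝ) < (1/4:ℝ) ^ m := by positivity
  have hqn : (1/4:ℝ) ^ m * Real.sqrt n ≤ 1 := by
    calc (1/4:ℝ) ^ m * Real.sqrt n ≤ (1/4:ℝ) ^ m * (4:ℝ) ^ m :=
          mul_le_mul_of_nonneg_left hsn4 (le_of_lt hqpos)
      _ = 1 := hq4
  have hqk : (1/4:ℝ) ^ m * k ^ m ≤ 1 := by
    rw [← mul_pow]
    have h14 : (1/4:ℝ) * k ≤ 1 := by linarith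
    exact pow_le_one₀ (by positivity) h14
  have hqle : (1/4:ℝ) ^ m ≤ 1/4 := by
    have h := pow_le_pow_of_le_one (by norm_num : (0:ℝ) ≤ 1/4) (by norm_num) (by omega : 1 ≤ m)
    simpa using h
  have hrp : k ^ ((m : ℕ) : ℝ) = k ^ m := Real.rpow_natCast k m
  have hsecond : (1/4:ℝ) ^ m * (k ^ ((m : ℕ) : ℝ) / (k - 1) + (Real.pi/4) * Real.sqrt n + 1)
      ≤ k/(k-1) + Real.pi/4 + 1/4 := by
    rw [hrp]
    have t1 : (1/4:ℝ) ^ m * (k ^ m / (k-1)) ≤ k/(k-1) := by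
      rw [mul_div_assoc']
      gcongr
      linarith [hqk]
    have t2 : (1/4:ℝ) ^ m * ((Real.pi/4) * Real.sqrt n) ≤ Real.pi/4 := by
      have hpi : (0:ℝ) ≤ Real.pi/4 := by positivity
      calc (1/4:ℝ) ^ m * ((Real.pi/4) * Real.sqrt n)
          = (Real.pi/4) * ((1/4:ℝ) ^ m * Real.sqrt n) := by ring
        _ ≤ (Real.pi/4) * 1 := mul_le_mul_of_nonneg_left hqn hpi
        _ = Real.pi/4 := mul_one _
    nlinarith [hqpos, hqle, t1, t2]
  have hfirst : (3/4:ℝ) * (∑ j ∈ Finset.range m, (1/4:ℝ) ^ j * (1 + k ^ (j:ℝ) / (k - 1)))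
      ≤ 1 + 3/((k-1)*(4-k)) := by
    have : (3/4:ℝ) * (4/3 + (1/(k-1)) * (4/(4-k))) = 1 + 3/((k-1)*(4-k)) := by
      field_simp
    nlinarith [hsum]
  linarith [hfirst, hsecond]
end
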